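/- arXiv:1209.1001 — 3 statements merged into one kernel-verified Lean document; each statement's English description precedes it below -/
import Mathlib

section
/- Let q ≥ 2 and λ ∈ ℂ with λ ∉ [-2√q, 2√q]. Then the quadratic equation qα² - λα + 1 = 0 has exactly one root α with |α| < 1/√q. -/
/-!
Write the quadratic as `q (α - a)(α - b)`, so that `a b = 1/q` and `a + b = λ/q`. Since
`‖a‖ ‖b‖ = (1/√q)²`, exactly one root lies inside the disc of radius `1/√q` unless the two
roots have the same modulus. In that case `a conj(a) = ‖a‖² = 1/q = a b`, so `b = conj a` and
`λ = q (a + conj a) = 2 q re a` is real with `|λ| ≤ 2 q ‖a‖ = 2√q`, which is excluded.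
-/

open ComplexConjugate

lemma exists_vieta_of_ne_zero {c : ℂ} (hc : c ≠ 0) (lam : ℂ) :
    ∃ a b : ℂ, c * (a + b) = lam ∧ c * (a * b) = 1 := by
  obtain ⟨s, hs⟩ := IsAlgClosed.exists_pow_nat_eq (lam ^ 2 - 4 * c) two_pos
  refine ⟨(lam + s) / (2 * c), (lam - s) / (2 * c), ?_, ?_⟩
  · field_simp
    ring
  · field_simp
    linear_combination -hs

lemma quadratic_eq_zero_iff_of_vieta {c lam a b : ℂ} (hc : c ≠ 0)
    (hsum : c * (a + b) = lam) (hprod : c * (a * b) = 1) (α : ℂ) :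
    c * α ^ 2 - lam * α + 1 = 0 ↔ α = a ∨ α = b := by
  have hfactor : c * α ^ 2 - lam * α + 1 = c * ((α - a) * (α - b)) := by
    linear_combination α * hsum - hprod
  rw [hfactor, mul_eq_zero, or_iff_right hc, mul_eq_zero, sub_eq_zero, sub_eq_zero]

lemma mul_norm_mul_norm_of_vieta {q : ℝ} (hq : 0 < q) {a b : ℂ}
    (hprod : (q : ℂ) * (a * b) = 1) : q * (‖a‖ * ‖b‖) = 1 := by
  simpa [abs_of_pos hq] using congrArg norm hprod

lemma exists_real_mem_Icc_of_vieta_of_norm_eq {q : ℝ} (hq : 0 < q) {lam a b : ℂ}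
    (hsum : (q : ℂ) * (a + b) = lam) (hprod : (q : ℂ) * (a * b) = 1) (hab : ‖a‖ = ‖b‖) :
    ∃ x ∈ Set.Icc (-(2 * √q)) (2 * √q), (x : ℂ) = lam := by
  have hnorm_sq : q * ‖a‖ ^ 2 = 1 := by
    rw [sq]
    simpa only [← hab] using mul_norm_mul_norm_of_vieta hq hprod
  have ha : a ≠ 0 := by
    rintro rfl
    simp at hprod
  have hconj : conj a = b := by
    refine mul_left_cancel₀ ha ?_
    have hq' : (q : ℂ) ≠ 0 := by exact_mod_cast hq.ne'
    rw [Complex.mul_conj']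
    apply mul_left_cancel₀ hq'
    rw [hprod]
    exact_mod_cast hnorm_sq
  have hq_norm : q * ‖a‖ = √q := by
    rw [← Real.sqrt_sq (by positivity : 0 ≤ q * ‖a‖)]
    congr 1
    linear_combination q * hnorm_sq
  refine ⟨2 * q * a.re, ?_, ?_⟩
  · have : |2 * q * a.re| ≤ 2 * √q := by
      rw [abs_mul, abs_of_pos (by positivity : (0 : ℝ) < 2 * q), ← hq_norm, mul_assoc]
      gcongr
      exact Complex.abs_re_le_norm a
    exact abs_le.mp this
  · rw [← hsum, ← hconj, Complex.add_conj]
    push_cast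
    ring

lemma lt_and_le_of_mul_eq_sq {u v t : ℝ} (hu : 0 ≤ u) (ht : 0 < t) (huv : u * v = t ^ 2)
    (h : u < v) : u < t ∧ t ≤ v := by
  constructor <;> nlinarith [mul_le_mul_of_nonneg_left h.le hu]

lemma existsUnique_and_norm_lt {P : ℂ → Prop} {a b : ℂ} {t : ℝ}
    (hP : ∀ α, P α ↔ α = a ∨ α = b) (ha : ‖a‖ < t) (hb : t ≤ ‖b‖) :
    ∃! α, P α ∧ ‖α‖ < t := by
  refine ⟨a, ⟨(hP a).2 (Or.inl rfl), ha⟩, ?_⟩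
  rintro α ⟨hα, hαt⟩
  rcases (hP α).1 hα with rfl | rfl
  · rfl
  · exact absurd hαt hb.not_gt

/-- For `q ≥ 2` and complex `λ` outside `[-2√q, 2√q]`, the quadratic
`qα² - λα + 1 = 0` has exactly one root `α` with `|α| < 1/√q`. -/
theorem stmt_0 (q : ℕ) (hq : 2 ≤ q) (lam : ℂ)
    (hlam : ∀ x : ℝ, x ∈ Set.Icc (-(2 * Real.sqrt q)) (2 * Real.sqrt q) → (x : ℂ) ≠ lam) :
    ∃! α : ℂ, (q : ℂ) * α ^ 2 - lam * α + 1 = 0 ∧ ‖α‖ < 1 / Real.sqrt q := by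
  have hq0 : (0 : ℝ) < q := by positivity
  have hqC : ((q : ℝ) : ℂ) ≠ 0 := by exact_mod_cast hq0.ne'
  rw [← Complex.ofReal_natCast]
  obtain ⟨a, b, hsum, hprod⟩ := exists_vieta_of_ne_zero hqC lam
  have hroots := quadratic_eq_zero_iff_of_vieta hqC hsum hprod
  have hne : ‖a‖ ≠ ‖b‖ := fun h ↦ by
    obtain ⟨x, hx, rfl⟩ := exists_real_mem_Icc_of_vieta_of_norm_eq hq0 hsum hprod h
    exact hlam x hx rfl
  have hnorm_prod : ‖a‖ * ‖b‖ = (1 / √q) ^ 2 := by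
    rw [div_pow, one_pow, Real.sq_sqrt hq0.le, eq_div_iff hq0.ne', mul_comm]
    exact mul_norm_mul_norm_of_vieta hq0 hprod
  rcases hne.lt_or_gt with h | h
  · obtain ⟨ha, hb⟩ := lt_and_le_of_mul_eq_sq (norm_nonneg a) (by positivity) hnorm_prod h
    exact existsUnique_and_norm_lt hroots ha hb
  · rw [mul_comm] at hnorm_prod
    obtain ⟨hb, ha⟩ := lt_and_le_of_mul_eq_sq (norm_nonneg b) (by positivity) hnorm_prod h
    exact existsUnique_and_norm_lt (fun α ↦ (hroots α).trans or_comm) hb ha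
end

section
/- Let q ≥ 2 and λ ∈ [-2√q, 2√q] ⊂ ℝ. Then the linear recurrence λu_k - q u_{k+1} - u_{k-1} = 0 (for k ≥ 1) has no nonzero solution (u_k)_{k≥0} satisfying ∑_{n≥0} q^n u_n² < ∞. -/
/-! Rescaling `vₙ = √qⁿ uₙ` turns the recurrence into `vₖ₊₂ = μ vₖ₊₁ - vₖ` with
`μ = λ/√q ∈ [-2, 2]` and the summability condition into `∑ vₙ² < ∞`, so in particular `vₙ → 0`.
The quadratic form `x² + y² - μxy` is conserved along `(vₙ₊₁, vₙ)` and, since `|μ| ≤ 2`, is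
squeezed between `(|x| - |y|)²` and `(|x| + |y|)²`. The upper bound tends to `0`, so the conserved
value is `0`; the lower bound then forces `|vₙ|` to be constant, hence `0`. -/

open Filter Topology

def recurrenceEnergy (μ : ℝ) (v : ℕ → ℝ) (n : ℕ) : ℝ :=
  v (n + 1) ^ 2 + v n ^ 2 - μ * v (n + 1) * v n

lemma abs_mul_mul_le_two_mul_abs_mul_abs {μ : ℝ} (hμ : |μ| ≤ 2) (x y : ℝ) :
    |μ * x * y| ≤ 2 * |x| * |y| := by
  rw [abs_mul, abs_mul]
  gcongr

lemma sq_abs_sub_abs_le_of_abs_le_two {μ : ℝ} (hμ : |μ| ≤ 2) (x y : ℝ) :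
    (|x| - |y|) ^ 2 ≤ x ^ 2 + y ^ 2 - μ * x * y := by
  nlinarith [abs_le.mp (abs_mul_mul_le_two_mul_abs_mul_abs hμ x y), sq_abs x, sq_abs y]

lemma le_sq_abs_add_abs_of_abs_le_two {μ : ℝ} (hμ : |μ| ≤ 2) (x y : ℝ) :
    x ^ 2 + y ^ 2 - μ * x * y ≤ (|x| + |y|) ^ 2 := by
  nlinarith [abs_le.mp (abs_mul_mul_le_two_mul_abs_mul_abs hμ x y), sq_abs x, sq_abs y]

section Recurrence

variable {μ : ℝ} {v : ℕ → ℝ}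

lemma recurrenceEnergy_eq_recurrenceEnergy_zero (hrec : ∀ k, v (k + 2) = μ * v (k + 1) - v k)
    (n : ℕ) : recurrenceEnergy μ v n = recurrenceEnergy μ v 0 := by
  induction n with
  | zero => rfl
  | succ n ih =>
    rw [← ih]
    unfold recurrenceEnergy
    rw [hrec n]
    ring

lemma eq_zero_of_recurrence_of_tendsto_zero (hμ : |μ| ≤ 2)
    (hrec : ∀ k, v (k + 2) = μ * v (k + 1) - v k) (hv : Tendsto v atTop (𝓝 0)) (n : ℕ) :
    v n = 0 := by
  have hbound : Tendsto (fun n => (|v (n + 1)| + |v n|) ^ 2) atTop (𝓝 0) := by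
    simpa using ((hv.comp (tendsto_add_atTop_nat 1)).abs.add hv.abs).pow 2
  have henergy : Tendsto (fun _ : ℕ => recurrenceEnergy μ v 0) atTop (𝓝 0) := by
    refine squeeze_zero (fun n => ?_) (fun n => ?_) hbound <;>
      rw [← recurrenceEnergy_eq_recurrenceEnergy_zero hrec n]
    · exact (sq_nonneg _).trans (sq_abs_sub_abs_le_of_abs_le_two hμ _ _)
    · exact le_sq_abs_add_abs_of_abs_le_two hμ _ _
  have habs_succ (n : ℕ) : |v (n + 1)| = |v n| := by
    have h := sq_abs_sub_abs_le_of_abs_le_two hμ (v (n + 1)) (v n)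
    rw [← recurrenceEnergy, recurrenceEnergy_eq_recurrenceEnergy_zero hrec,
      tendsto_const_nhds_iff.mp henergy] at h
    exact sub_eq_zero.mp (pow_eq_zero_iff two_ne_zero |>.mp (le_antisymm h (sq_nonneg _)))
  have habs (n : ℕ) : |v n| = |v 0| := by
    induction n with
    | zero => rfl
    | succ n ih => rw [habs_succ, ih]
  have hv0 : |v 0| = 0 := by
    simpa [habs] using hv.abs
  rw [← abs_eq_zero, habs, hv0]

end Recurrence

lemma tendsto_zero_of_summable_sq {v : ℕ → ℝ} (hv : Summable fun n => v n ^ 2) :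
    Tendsto v atTop (𝓝 0) := by
  rw [tendsto_zero_iff_abs_tendsto_zero]
  simpa [Function.comp_def, Real.sqrt_sq_eq_abs] using
    (Real.continuous_sqrt.tendsto 0).comp hv.tendsto_atTop_zero

/-- For `q ≥ 2` and real `λ ∈ [-2√q, 2√q]`, the recurrence
`λ u_k - q u_{k+1} - u_{k-1} = 0` (k ≥ 1) has no nonzero solution with
`∑ qⁿ uₙ² < ∞`. -/
theorem stmt_1 (q : ℕ) (hq : 2 ≤ q) (lam : ℝ)
    (hlam : lam ∈ Set.Icc (-(2 * Real.sqrt q)) (2 * Real.sqrt q))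
    (u : ℕ → ℝ)
    (hrec : ∀ k : ℕ, 1 ≤ k → lam * u k - q * u (k + 1) - u (k - 1) = 0)
    (hsum : Summable fun n : ℕ => (q : ℝ) ^ n * u n ^ 2) :
    ∀ n, u n = 0 := by
  have hsqrt : 0 < Real.sqrt q := Real.sqrt_pos.mpr (by exact_mod_cast (by omega : 0 < q))
  have hsq : Real.sqrt q ^ 2 = q := Real.sq_sqrt (Nat.cast_nonneg q)
  set v : ℕ → ℝ := fun n => Real.sqrt q ^ n * u n
  have hμ : |lam / Real.sqrt q| ≤ 2 := by
    rw [abs_div, abs_of_pos hsqrt, div_le_iff₀ hsqrt]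
    exact abs_le.mpr hlam
  have hrecv (k : ℕ) : v (k + 2) = lam / Real.sqrt q * v (k + 1) - v k := by
    have h := hrec (k + 1) (by omega)
    simp only [v, Nat.add_sub_cancel, pow_succ] at h ⊢
    have hcancel : lam / Real.sqrt q * (Real.sqrt q ^ k * Real.sqrt q * u (k + 1))
        = Real.sqrt q ^ k * lam * u (k + 1) := by
      field_simp
    rw [hcancel]
    linear_combination (-Real.sqrt q ^ k) * h + Real.sqrt q ^ k * u (k + 2) * hsq
  have hsumv : Summable fun n => v n ^ 2 := by
    convert hsum using 2 with n
    rw [mul_pow, ← pow_mul, mul_comm n 2, pow_mul, hsq]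
  intro n
  simpa [v, hsqrt.ne'] using
    eq_zero_of_recurrence_of_tendsto_zero hμ hrecv (tendsto_zero_of_summable_sq hsumv) n
end

section
/- For λ outside I_q, with α the root of qα² - λα + 1 = 0 satisfying |α| < 1/√q and C_λ = 1/(λ - (q+1)α), the function f(x) = C_λ α^{d(O,x)} on the (q+1)-regular tree satisfies (λ - A₀)f = δ_O and belongs to ℓ². -/
/-!
On a tree, a vertex at distance `m + 1` from the root `O` has exactly one neighbour at distance `m`
and `q` neighbours at distance `m + 2`, so `(λ - A₀) f` vanishes there because
`λ α^(m+1) - α^m - q α^(m+2) = -α^m (qα² - λα + 1)`; at `O` it equals `C (λ - (q+1)α) = 1`, and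
`λ - (q+1)α ≠ 0` because otherwise `α² = 1`, whereas `|α| < 1/√q ≤ 1`.
The sphere of radius `n` has at most `(q+1)qⁿ` points, so `‖f‖₂²` is dominated by a geometric
series of ratio `q|α|² < 1`.
-/

open SimpleGraph Finset

lemma memℓp_comp_of_card_filter_le {V E : Type*} [NormedAddCommGroup E] {p : ENNReal}
    (d : V → ℕ) (g : ℕ → E) (a : ℕ → ℝ)
    (hcard : ∀ (s : Finset V) (n : ℕ), (#{x ∈ s | d x = n} : ℝ) ≤ a n)
    (hsum : Summable fun n => a n * ‖g n‖ ^ p.toReal) :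
    Memℓp (fun x => g (d x)) p := by
  classical
  have ha : ∀ n, 0 ≤ a n := fun n => by simpa using hcard ∅ n
  refine memℓp_gen' (C := ∑' n, a n * ‖g n‖ ^ p.toReal) fun s => ?_
  calc ∑ x ∈ s, ‖g (d x)‖ ^ p.toReal
      = ∑ n ∈ s.image d, #{x ∈ s | d x = n} • ‖g n‖ ^ p.toReal :=
        sum_comp (fun n => ‖g n‖ ^ p.toReal) d
    _ ≤ ∑ n ∈ s.image d, a n * ‖g n‖ ^ p.toReal := by
        gcongr with n
        rw [nsmul_eq_mul]
        exact mul_le_mul_of_nonneg_right (hcard s n) (by positivity)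
    _ ≤ ∑' n, a n * ‖g n‖ ^ p.toReal :=
        hsum.sum_le_tsum _ fun n _ => mul_nonneg (ha n) (by positivity)

lemma mul_sq_lt_one_of_lt_one_div_sqrt {q r : ℝ} (hq : 0 < q) (hr : 0 ≤ r)
    (h : r < 1 / √q) : q * r ^ 2 < 1 := by
  have hrq : r * √q < 1 := (lt_div_iff₀ (by positivity)).1 h
  calc q * r ^ 2 = (r * √q) ^ 2 := by rw [mul_pow, Real.sq_sqrt hq.le]; ring
    _ < 1 := by nlinarith [mul_nonneg hr (Real.sqrt_nonneg q)]

lemma summable_mul_pow_mul_norm_mul_pow_rpow_two {𝕜 : Type*} [NormedDivisionRing 𝕜]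
    {q : ℝ} (hq : 0 ≤ q) (c : ℝ) (C α : 𝕜) (hqα : q * ‖α‖ ^ 2 < 1) :
    Summable fun n : ℕ => c * q ^ n * ‖C * α ^ n‖ ^ (2 : ℝ) := by
  have hgeom := (summable_geometric_of_lt_one (by positivity) hqα).mul_left (c * ‖C‖ ^ 2)
  refine hgeom.congr fun n => ?_
  rw [Real.rpow_two, norm_mul, norm_pow]
  ring

lemma sub_add_one_mul_ne_zero_of_norm_lt_one {𝕜 : Type*} [NormedField 𝕜] {q lam α : 𝕜}
    (hα : q * α ^ 2 - lam * α + 1 = 0) (hα1 : ‖α‖ < 1) : lam - (q + 1) * α ≠ 0 := by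
  intro h
  have hsq : α ^ 2 = 1 := by linear_combination -α * h - hα
  have : ‖α‖ ^ 2 = 1 := by rw [← norm_pow, hsq, norm_one]
  nlinarith [norm_nonneg α]

namespace SimpleGraph

variable {V : Type*} {G : SimpleGraph V}

lemma Connected.exists_adj_dist_add_one_eq (hG : G.Connected) (O : V) {x : V} (hx : x ≠ O) :
    ∃ y, G.Adj x y ∧ G.dist O y + 1 = G.dist O x := by
  obtain ⟨p, hp⟩ := hG.exists_walk_length_eq_dist x O
  obtain ⟨y, hxy, p', rfl⟩ := Walk.exists_eq_cons_of_ne hx p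
  refine ⟨y, hxy, le_antisymm ?_ ?_⟩
  · have := dist_le p'
    rw [Walk.length_cons] at hp
    rw [dist_comm (u := O), dist_comm (u := O)]
    omega
  · have := hG.dist_triangle (u := O) (v := y) (w := x)
    rwa [dist_eq_one_iff_adj.2 hxy.symm] at this

lemma sum_neighborFinset_dist_self [G.LocallyFinite] {M : Type*} [AddCommMonoid M]
    (O : V) (f : ℕ → M) :
    ∑ y ∈ G.neighborFinset O, f (G.dist O y) = G.degree O • f 1 := by
  rw [sum_congr rfl fun y hy => by rw [dist_eq_one_iff_adj.2 ((mem_neighborFinset ..).1 hy)],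
    sum_const, card_neighborFinset_eq_degree]

namespace IsTree

variable (hG : G.IsTree) (O : V)
include hG

lemma eq_of_adj_of_dist_add_one_eq {x y y' : V} (hy : G.Adj x y) (hy' : G.Adj x y')
    (hdy : G.dist O y + 1 = G.dist O x) (hdy' : G.dist O y' + 1 = G.dist O x) : y = y' := by
  obtain ⟨P, hP, -⟩ := hG.connected.exists_path_of_dist O x
  have key : ∀ z, G.Adj x z → G.dist O z + 1 = G.dist O x → z = P.penultimate := by
    intro z hz hdz
    obtain ⟨p, -, hp⟩ := hG.connected.exists_path_of_dist O z
    have hpath : (p.concat hz.symm).IsPath :=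
      Walk.isPath_of_length_eq_dist _ (by rw [Walk.length_concat, hp, hdz])
    have : p.concat hz.symm = P :=
      congrArg Subtype.val ((hG.isAcyclic.subsingleton_path O x).elim ⟨_, hpath⟩ ⟨P, hP⟩)
    rw [← this, Walk.penultimate_concat]
  rw [key y hy hdy, key y' hy' hdy']

lemma sum_neighborFinset_dist [DecidableEq V] [G.LocallyFinite] {M : Type*} [AddCommMonoid M]
    (f : ℕ → M) {x : V} {m : ℕ} (hx : G.dist O x = m + 1) :
    ∑ y ∈ G.neighborFinset x, f (G.dist O y) = f m + (G.degree x - 1) • f (m + 2) := by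
  have hxO : x ≠ O := by rintro rfl; simp at hx
  obtain ⟨y₀, hy₀, hdy₀⟩ := hG.connected.exists_adj_dist_add_one_eq O hxO
  have hy₀mem : y₀ ∈ G.neighborFinset x := (mem_neighborFinset ..).2 hy₀
  have hchild : ∀ y ∈ (G.neighborFinset x).erase y₀, G.dist O y = m + 2 := by
    intro y hy
    obtain ⟨hne, hadj⟩ := mem_erase.1 hy
    rw [mem_neighborFinset] at hadj
    rcases hG.dist_eq_dist_add_one_of_adj O hadj with h | h
    · exact absurd (hG.eq_of_adj_of_dist_add_one_eq O hadj hy₀ h.symm hdy₀) hne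
    · omega
  rw [← add_sum_erase _ _ hy₀mem, sum_congr rfl fun y hy => by rw [hchild y hy], sum_const,
    card_erase_of_mem hy₀mem, card_neighborFinset_eq_degree]
  congr
  omega

lemma card_le_of_forall_dist_eq_succ [G.LocallyFinite] {q : ℕ} (hdeg : ∀ v, G.degree v ≤ q + 1)
    (n : ℕ) (s : Finset V) (hs : ∀ x ∈ s, G.dist O x = n + 1) : #s ≤ (q + 1) * q ^ n := by
  classical
  induction n generalizing s with
  | zero =>
    calc #s ≤ #(G.neighborFinset O) :=
          card_le_card fun x hx => (mem_neighborFinset ..).2 (dist_eq_one_iff_adj.1 (hs x hx))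
      _ ≤ (q + 1) * q ^ 0 := by simpa [card_neighborFinset_eq_degree] using hdeg O
  | succ n ih =>
    choose! parent hadj hdist using
      fun x (hx : x ≠ O) => hG.connected.exists_adj_dist_add_one_eq O hx
    have hsO : ∀ x ∈ s, x ≠ O := fun x hx h => by simpa [h] using hs x hx
    have himage : ∀ b ∈ s.image parent, G.dist O b = n + 1 := by
      simp only [mem_image]
      rintro b ⟨x, hx, rfl⟩
      have := hdist x (hsO x hx)
      have := hs x hx
      omega
    -- the children of `b` are its neighbours other than its own parent
    have hfiber : ∀ b ∈ s.image parent, #{x ∈ s | parent x = b} ≤ q := by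
      intro b hb
      have hbO : b ≠ O := fun h => by simpa [h] using himage b hb
      have hsub : {x ∈ s | parent x = b} ⊆ (G.neighborFinset b).erase (parent b) := by
        intro x hx
        obtain ⟨hxs, rfl⟩ := mem_filter.1 hx
        refine mem_erase.2 ⟨fun h => ?_, (mem_neighborFinset ..).2 (hadj x (hsO x hxs)).symm⟩
        have := hdist (parent x) hbO
        have := himage _ hb
        have := hs x hxs
        rw [h] at this
        omega
      calc #{x ∈ s | parent x = b} ≤ #((G.neighborFinset b).erase (parent b)) := card_le_card hsub
        _ = G.degree b - 1 := by
          rw [card_erase_of_mem ((mem_neighborFinset ..).2 (hadj b hbO)),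
            card_neighborFinset_eq_degree]
        _ ≤ q := by have := hdeg b; omega
    calc #s ≤ q * #(s.image parent) := card_le_mul_card_image s q hfiber
      _ ≤ q * ((q + 1) * q ^ n) := Nat.mul_le_mul_left _ (ih _ himage)
      _ = (q + 1) * q ^ (n + 1) := by ring

lemma card_filter_dist_eq_le [G.LocallyFinite] {q : ℕ} (hq : 1 ≤ q)
    (hdeg : ∀ v, G.degree v ≤ q + 1) (s : Finset V) (n : ℕ) :
    #{x ∈ s | G.dist O x = n} ≤ (q + 1) * q ^ n := by
  cases n with
  | zero =>
    calc #{x ∈ s | G.dist O x = 0} ≤ #{O} := card_le_card fun x hx =>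
          mem_singleton.2 (hG.connected.dist_eq_zero_iff.1 (mem_filter.1 hx).2).symm
      _ ≤ (q + 1) * q ^ 0 := by simp
  | succ n =>
    calc #{x ∈ s | G.dist O x = n + 1} ≤ (q + 1) * q ^ n :=
          hG.card_le_of_forall_dist_eq_succ O hdeg n _ fun x hx => (mem_filter.1 hx).2
      _ ≤ (q + 1) * q ^ (n + 1) := Nat.mul_le_mul_left _ (Nat.pow_le_pow_right hq n.le_succ)

lemma memℓp_two_mul_pow_dist [G.LocallyFinite] {𝕜 : Type*} [NormedDivisionRing 𝕜] {q : ℕ}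
    (hq : 1 ≤ q) (hdeg : ∀ v, G.degree v ≤ q + 1) (C α : 𝕜) (hqα : q * ‖α‖ ^ 2 < 1) :
    Memℓp (fun x => C * α ^ G.dist O x) 2 := by
  refine memℓp_comp_of_card_filter_le (G.dist O) (fun n => C * α ^ n)
    (fun n => ((q : ℝ) + 1) * (q : ℝ) ^ n)
    (fun s n => by exact_mod_cast hG.card_filter_dist_eq_le O hq hdeg s n) ?_
  simpa using summable_mul_pow_mul_norm_mul_pow_rpow_two q.cast_nonneg ((q : ℝ) + 1) C α hqα

lemma mul_pow_dist_sub_sum_neighborFinset [DecidableEq V] [G.LocallyFinite] {R : Type*}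
    [CommRing R] {q : ℕ} (hreg : ∀ v, G.degree v = q + 1) {lam α C : R}
    (hα : q * α ^ 2 - lam * α + 1 = 0) (hC : C * (lam - (q + 1) * α) = 1) (x : V) :
    lam * (C * α ^ G.dist O x) - ∑ y ∈ G.neighborFinset x, C * α ^ G.dist O y =
      if x = O then 1 else 0 := by
  split_ifs with hx
  · subst hx
    rw [sum_neighborFinset_dist_self x fun n => C * α ^ n, hreg, dist_self, nsmul_eq_mul]
    push_cast
    linear_combination hC
  · obtain ⟨m, hm⟩ := Nat.exists_eq_add_one.2 (hG.connected.pos_dist_of_ne (Ne.symm hx))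
    rw [hG.sum_neighborFinset_dist O (fun n => C * α ^ n) hm, hreg, hm, nsmul_eq_mul]
    push_cast
    linear_combination (-C * α ^ m) * hα

end IsTree

end SimpleGraph

/-- On the (q+1)-regular tree with root `O`, for `λ ∉ [-2√q, 2√q]`, `α` the root
of `qα² - λα + 1 = 0` with `|α| < 1/√q` and `C = (λ - (q+1)α)⁻¹`, the function
`f x = C α^{d(O,x)}` is in `ℓ²` and satisfies `(λ - A₀) f = δ_O`. -/
theorem stmt_10 {V : Type*} [DecidableEq V] (G : SimpleGraph V)
    [∀ v : V, Fintype (G.neighborSet v)] (q : ℕ) (hq : 2 ≤ q)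
    (hconn : G.Connected) (hacyc : G.IsAcyclic)
    (hreg : ∀ v : V, G.degree v = q + 1) (O : V)
    (lam : ℂ)
    (hlam : ∀ x : ℝ, x ∈ Set.Icc (-(2 * Real.sqrt q)) (2 * Real.sqrt q) → (x : ℂ) ≠ lam)
    (α : ℂ) (hα : (q : ℂ) * α ^ 2 - lam * α + 1 = 0)
    (hαsmall : ‖α‖ < 1 / Real.sqrt q)
    (C : ℂ) (hC : C = (lam - ((q : ℂ) + 1) * α)⁻¹) :
    Memℓp (fun x : V => C * α ^ G.dist O x) 2 ∧
      ∀ x : V, lam * (C * α ^ G.dist O x)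
          - ∑ y ∈ G.neighborFinset x, C * α ^ G.dist O y
        = if x = O then 1 else 0 := by
  have hT : G.IsTree := ⟨hconn, hacyc⟩
  have hq1 : (1 : ℝ) ≤ q := by exact_mod_cast (by omega : 1 ≤ q)
  have hqα : (q : ℝ) * ‖α‖ ^ 2 < 1 :=
    mul_sq_lt_one_of_lt_one_div_sqrt (by positivity) (norm_nonneg α) hαsmall
  have hα1 : ‖α‖ < 1 := (sq_lt_one_iff₀ (norm_nonneg α)).1 (by nlinarith [sq_nonneg ‖α‖])
  have hCα : C * (lam - (q + 1) * α) = 1 :=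
    hC ▸ inv_mul_cancel₀ (sub_add_one_mul_ne_zero_of_norm_lt_one hα hα1)
  exact ⟨hT.memℓp_two_mul_pow_dist O (by omega) (fun v => (hreg v).le) C α hqα,
    hT.mul_pow_dist_sub_sum_neighborFinset O hreg hα hCα⟩
end
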